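/- Let A, B : ℚ_p^N → ℝ be radial integrable functions, U, Z ∈ X_∞, and let f : ℝ → ℝ be a bounded Lipschitz function with f(0) = 0. Let X be the solution (defined for all t ≥ 0) of the integral equation X(·,t) = e^{−t} X₀ + ∫₀^t e^{−(t−s)} H(X(·,s)) ds with X₀ ∈ X_∞. Then |X(x,t)| ≤ ‖X₀‖_∞ + ‖f‖_∞ ‖A‖_{L¹} + ‖U‖_∞ ‖B‖_{L¹} + ‖Z‖_∞ for all t ≥ 0 and all x ∈ ℚ_p^N. -/

import Mathlib

open MeasureTheory Filter

/-- A function on `ℚ_p^N` (with the sup norm) is *radial* if its value depends only on the norm. -/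
def IsRadial {p N : ℕ} [Fact p.Prime] (E : (Fin N → ℚ_[p]) → ℝ) : Prop :=
  ∀ x y : Fin N → ℚ_[p], ‖x‖ = ‖y‖ → E x = E y

/-- Membership in `X_∞`: continuous and vanishing at infinity. -/
def MemXInf {p N : ℕ} [Fact p.Prime] (g : (Fin N → ℚ_[p]) → ℝ) : Prop :=
  Continuous g ∧ Tendsto g (comap (fun x : Fin N → ℚ_[p] => ‖x‖) atTop) (nhds 0)

/-- The operator `H` of a `p`-adic continuous CNN. -/
noncomputable def Hop {p N : ℕ} [Fact p.Prime] [MeasurableSpace (Fin N → ℚ_[p])]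
    (μ : MeasureTheory.Measure (Fin N → ℚ_[p]))
    (A B U Z : (Fin N → ℚ_[p]) → ℝ) (f : ℝ → ℝ)
    (g : (Fin N → ℚ_[p]) → ℝ) (x : Fin N → ℚ_[p]) : ℝ :=
  (∫ y, A (x - y) * f (g y) ∂μ) + (∫ y, B (x - y) * U y ∂μ) + Z x


/-- Continuous-in-time `X_∞`-valued solution of the CNN integral equation, defined for
all `t ≥ 0`. -/
def IsCNNIntegralSolutionInfty {p N : ℕ} [Fact p.Prime] [MeasurableSpace (Fin N → ℚ_[p])]
    (μ : MeasureTheory.Measure (Fin N → ℚ_[p]))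
    (A B U Z : (Fin N → ℚ_[p]) → ℝ) (f : ℝ → ℝ)
    (X₀ : (Fin N → ℚ_[p]) → ℝ) (X : (Fin N → ℚ_[p]) → ℝ → ℝ) : Prop :=
  (∀ t : ℝ, 0 ≤ t → MemXInf (fun x => X x t)) ∧
  (∀ t₀ : ℝ, 0 ≤ t₀ → ∀ ε > (0:ℝ), ∃ δ > (0:ℝ), ∀ t : ℝ, 0 ≤ t →
      |t - t₀| < δ → ∀ x : Fin N → ℚ_[p], |X x t - X x t₀| ≤ ε) ∧
  (∀ t : ℝ, 0 ≤ t → ∀ x : Fin N → ℚ_[p],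
      X x t = Real.exp (-t) * X₀ x +
        ∫ s in (0:ℝ)..t, Real.exp (-(t - s)) * Hop μ A B U Z f (fun y => X y s) x)

/-- A continuous function vanishing at infinity on `ℚ_p^N` is bounded. -/
lemma memXInf_bounded {p N : ℕ} [Fact p.Prime] (g : (Fin N → ℚ_[p]) → ℝ)
    (hg : MemXInf g) : ∃ C : ℝ, 0 ≤ C ∧ ∀ x, |g x| ≤ C := by
  have h := hg.2 (Metric.ball_mem_nhds (0:ℝ) one_pos)
  rw [mem_map, mem_comap] at h
  obtain ⟨S, hS, hSsub⟩ := h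
  rw [mem_atTop_sets] at hS
  obtain ⟨R, hR⟩ := hS
  set R' : ℝ := max R 0 with hR'
  have hKc : IsCompact (Metric.closedBall (0 : Fin N → ℚ_[p]) R') := isCompact_closedBall _ _
  have hne : (Metric.closedBall (0 : Fin N → ℚ_[p]) R').Nonempty :=
    ⟨0, by simp [hR']⟩
  obtain ⟨z, hz, hzmax⟩ := IsCompact.exists_isMaxOn hKc hne
    ((continuous_abs.comp hg.1).continuousOn)
  refine ⟨max (|g z|) 1, le_trans zero_le_one (le_max_right _ _), fun x => ?_⟩
  by_cases hx : ‖x‖ ≤ R'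
  · exact le_trans (hzmax (by simpa [dist_zero_right] using hx)) (le_max_left _ _)
  · push_neg at hx
    have hx' : R ≤ ‖x‖ := le_trans (le_max_left _ _) hx.le
    have : g x ∈ Metric.ball (0:ℝ) 1 := hSsub (hR ‖x‖ hx')
    rw [Metric.mem_ball, Real.dist_eq, sub_zero] at this
    exact le_trans this.le (le_max_right _ _)

/-- Bound for one convolution-type integral. -/
lemma conv_bound {p N : ℕ} [Fact p.Prime]
    [MeasurableSpace (Fin N → ℚ_[p])] [BorelSpace (Fin N → ℚ_[p])]
    (μ : Measure (Fin N → ℚ_[p])) [μ.IsAddHaarMeasure]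
    (A : (Fin N → ℚ_[p]) → ℝ) (hA : Integrable A μ)
    (w : (Fin N → ℚ_[p]) → ℝ) (hw : AEStronglyMeasurable w μ)
    (C : ℝ) (hC : ∀ y, |w y| ≤ C) (x : Fin N → ℚ_[p]) :
    |∫ y, A (x - y) * w y ∂μ| ≤ C * ∫ y, |A y| ∂μ := by
  have hC0 : 0 ≤ C := le_trans (abs_nonneg _) (hC 0)
  have hAx : Integrable (fun y => A (x - y)) μ := hA.comp_sub_left x
  have hint : Integrable (fun y => A (x - y) * w y) μ := by
    have := hAx.bdd_mul hw (Eventually.of_forall fun y => by simpa [Real.norm_eq_abs] using hC y)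
    simpa [mul_comm] using this
  calc |∫ y, A (x - y) * w y ∂μ| ≤ ∫ y, |A (x - y)| * |w y| ∂μ := by
        have := norm_integral_le_integral_norm (μ := μ) (f := fun y => A (x - y) * w y)
        simpa [Real.norm_eq_abs, abs_mul] using this
    _ ≤ ∫ y, |A (x - y)| * C ∂μ := by
        refine integral_mono (by simpa [abs_mul] using hint.abs) (hAx.abs.mul_const C) fun y => ?_
        exact mul_le_mul_of_nonneg_left (hC y) (abs_nonneg _)
    _ = (∫ y, |A (x - y)| ∂μ) * C := integral_mul_const _ _
    _ = (∫ y, |A y| ∂μ) * C := by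
        rw [integral_sub_left_eq_self (fun y => |A y|) μ x]
    _ = C * ∫ y, |A y| ∂μ := mul_comm _ _

/-- All states of a `p`-adic continuous CNN are bounded:
`|X(x,t)| ≤ ‖X₀‖_∞ + ‖f‖_∞ ‖A‖₁ + ‖U‖_∞ ‖B‖₁ + ‖Z‖_∞` for all `t ≥ 0` and all `x`. -/
theorem stmt10 (p N : ℕ) [Fact p.Prime] (hN : 1 ≤ N)
    [MeasurableSpace (Fin N → ℚ_[p])] [BorelSpace (Fin N → ℚ_[p])]
    (μ : Measure (Fin N → ℚ_[p])) [μ.IsAddHaarMeasure]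
    (hμ : μ {x : Fin N → ℚ_[p] | ‖x‖ ≤ 1} = 1)
    (A B : (Fin N → ℚ_[p]) → ℝ) (hArad : IsRadial A) (hBrad : IsRadial B)
    (hA : Integrable A μ) (hB : Integrable B μ)
    (U Z : (Fin N → ℚ_[p]) → ℝ) (hU : MemXInf U) (hZ : MemXInf Z)
    (f : ℝ → ℝ) (L : NNReal) (hf : LipschitzWith L f) (hf0 : f 0 = 0)
    (hfbdd : ∃ C : ℝ, ∀ r : ℝ, |f r| ≤ C)
    (X₀ : (Fin N → ℚ_[p]) → ℝ) (hX₀ : MemXInf X₀)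
    (X : (Fin N → ℚ_[p]) → ℝ → ℝ)
    (hX : IsCNNIntegralSolutionInfty μ A B U Z f X₀ X) :
    ∀ t : ℝ, 0 ≤ t → ∀ x : Fin N → ℚ_[p],
      |X x t| ≤ (⨆ y : Fin N → ℚ_[p], |X₀ y|) + (⨆ r : ℝ, |f r|) * (∫ y, |A y| ∂μ)
        + (⨆ y : Fin N → ℚ_[p], |U y|) * (∫ y, |B y| ∂μ)
        + ⨆ y : Fin N → ℚ_[p], |Z y| := by
  intro t ht x
  -- Abbreviations and basic facts about the suprema.
  obtain ⟨CF, hCF⟩ := hfbdd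
  obtain ⟨CU, -, hCUb⟩ := memXInf_bounded U hU
  obtain ⟨CZ, -, hCZb⟩ := memXInf_bounded Z hZ
  obtain ⟨CX, -, hCXb⟩ := memXInf_bounded X₀ hX₀
  have hFbd : BddAbove (Set.range fun r : ℝ => |f r|) := ⟨CF, by rintro _ ⟨r, rfl⟩; exact hCF r⟩
  have hUbd : BddAbove (Set.range fun y : Fin N → ℚ_[p] => |U y|) :=
    ⟨CU, by rintro _ ⟨y, rfl⟩; exact hCUb y⟩
  have hZbd : BddAbove (Set.range fun y : Fin N → ℚ_[p] => |Z y|) :=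
    ⟨CZ, by rintro _ ⟨y, rfl⟩; exact hCZb y⟩
  have hXbd : BddAbove (Set.range fun y : Fin N → ℚ_[p] => |X₀ y|) :=
    ⟨CX, by rintro _ ⟨y, rfl⟩; exact hCXb y⟩
  set F := ⨆ r : ℝ, |f r| with hF
  set MU := ⨆ y : Fin N → ℚ_[p], |U y| with hMU
  set MZ := ⨆ y : Fin N → ℚ_[p], |Z y| with hMZ
  set MX := ⨆ y : Fin N → ℚ_[p], |X₀ y| with hMX
  have hfleF : ∀ r, |f r| ≤ F := fun r => le_ciSup hFbd r
  have hUleMU : ∀ y, |U y| ≤ MU := fun y => le_ciSup hUbd y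
  have hZleMZ : ∀ y, |Z y| ≤ MZ := fun y => le_ciSup hZbd y
  have hXleMX : ∀ y, |X₀ y| ≤ MX := fun y => le_ciSup hXbd y
  have hF0 : 0 ≤ F := le_trans (abs_nonneg _) (hfleF 0)
  have hMU0 : 0 ≤ MU := le_trans (abs_nonneg _) (hUleMU 0)
  have hMZ0 : 0 ≤ MZ := le_trans (abs_nonneg _) (hZleMZ 0)
  have hMX0 : 0 ≤ MX := le_trans (abs_nonneg _) (hXleMX 0)
  have hIA0 : 0 ≤ ∫ y, |A y| ∂μ := integral_nonneg fun y => abs_nonneg _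
  have hIB0 : 0 ≤ ∫ y, |B y| ∂μ := integral_nonneg fun y => abs_nonneg _
  set K : ℝ := F * (∫ y, |A y| ∂μ) + MU * (∫ y, |B y| ∂μ) + MZ with hK
  have hK0 : 0 ≤ K := by positivity
  -- Bound on the operator `Hop` applied to a time slice.
  have hHop : ∀ s : ℝ, 0 ≤ s → |Hop μ A B U Z f (fun y => X y s) x| ≤ K := by
    intro s hs
    have hgc : Continuous fun y => X y s := (hX.1 s hs).1
    have h1 : |∫ y, A (x - y) * f (X y s) ∂μ| ≤ F * ∫ y, |A y| ∂μ :=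
      conv_bound μ A hA (fun y => f (X y s))
        ((hf.continuous.comp hgc).aestronglyMeasurable) F (fun y => hfleF _) x
    have h2 : |∫ y, B (x - y) * U y ∂μ| ≤ MU * ∫ y, |B y| ∂μ :=
      conv_bound μ B hB U hU.1.aestronglyMeasurable MU hUleMU x
    calc |Hop μ A B U Z f (fun y => X y s) x|
        ≤ |∫ y, A (x - y) * f (X y s) ∂μ| + |∫ y, B (x - y) * U y ∂μ| + |Z x| := by
          unfold Hop
          exact le_trans (abs_add_le _ _) (add_le_add_left (abs_add_le _ _) _)
      _ ≤ K := by rw [hK]; exact add_le_add (add_le_add h1 h2) (hZleMZ x)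
  -- Bound on the time integral.
  have hbound : ‖∫ s in (0:ℝ)..t, Real.exp (-(t - s)) * Hop μ A B U Z f (fun y => X y s) x‖
      ≤ |∫ s in (0:ℝ)..t, Real.exp (-(t - s)) * K| := by
    refine intervalIntegral.norm_integral_le_abs_of_norm_le ?_ ?_
    · refine (ae_restrict_iff' measurableSet_uIoc).mpr (Eventually.of_forall fun s hs => ?_)
      rw [Set.uIoc_of_le ht] at hs
      have hs0 : 0 ≤ s := hs.1.le
      rw [Real.norm_eq_abs, abs_mul, abs_of_pos (Real.exp_pos _)]
      exact mul_le_mul_of_nonneg_left (hHop s hs0) (Real.exp_pos _).le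
    · exact ((Real.continuous_exp.comp ((continuous_const.sub continuous_id).neg)).mul continuous_const).intervalIntegrable _ _
  have hval : (∫ s in (0:ℝ)..t, Real.exp (-(t - s)) * K)
      = (Real.exp t - 1) * (Real.exp (-t) * K) := by
    have heq : ∀ s : ℝ, Real.exp (-(t - s)) * K = Real.exp s * (Real.exp (-t) * K) := by
      intro s
      rw [← mul_assoc, ← Real.exp_add]
      ring_nf
    simp_rw [heq]
    rw [intervalIntegral.integral_mul_const, integral_exp, Real.exp_zero]
  have hEe : Real.exp t * Real.exp (-t) = 1 := by
    rw [← Real.exp_add, add_neg_cancel, Real.exp_zero]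
  have hint_le : |∫ s in (0:ℝ)..t, Real.exp (-(t - s)) * K| ≤ K := by
    rw [hval, abs_of_nonneg]
    · nlinarith [Real.exp_pos (-t), Real.one_le_exp ht, hK0]
    · have h1 : (0:ℝ) ≤ Real.exp t - 1 := by linarith [Real.one_le_exp ht]
      positivity
  -- Put everything together.
  have heqn := hX.2.2 t ht x
  have : |X x t| ≤ Real.exp (-t) * |X₀ x| + K := by
    rw [heqn]
    refine le_trans (abs_add_le _ _) (add_le_add ?_ ?_)
    · rw [abs_mul, abs_of_pos (Real.exp_pos _)]
    · exact le_trans (hbound) hint_le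
  have hexp : Real.exp (-t) ≤ 1 := Real.exp_le_one_iff.mpr (neg_nonpos.mpr ht)
  have h3 : Real.exp (-t) * |X₀ x| ≤ MX := by
    calc Real.exp (-t) * |X₀ x| ≤ 1 * |X₀ x| :=
          mul_le_mul_of_nonneg_right hexp (abs_nonneg _)
      _ = |X₀ x| := one_mul _
      _ ≤ MX := hXleMX x
  calc |X x t| ≤ Real.exp (-t) * |X₀ x| + K := this
    _ ≤ MX + K := add_le_add h3 le_rfl
    _ = MX + F * (∫ y, |A y| ∂μ) + MU * (∫ y, |B y| ∂μ) + MZ := by rw [hK]; ring
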